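/- Given two systems S1 and S2 with disjoint place and transition sets, the synchronous product of their reachability graphs is identical to the reachability graph of their synchronous product: R(S1) ⊗ R(S2) = R(S1 ⊗ S2) (same vertices, same root, same transitions, and same labeled arcs, identifying a marking on P1∪P2 with the pair of its restrictions). -/

import Mathlib

/-- A Petri net over places `P`, transitions `T`, and alphabet `A`.
`pre p t` means there is an arc from place `p` to transition `t`;
`post t p` means there is an arc from transition `t` to place `p`;
`label t = none` means that `t` is silent (labeled `τ`). -/
structure PetriNet (P T A : Type) where
  pre : P → T → Prop
  post : T → P → Prop
  label : T → Option A

namespace PetriNet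

variable {P T A : Type}

/-- A transition is enabled if all of its input places are marked. -/
def Enabled (N : PetriNet P T A) (M : P → ℕ) (t : T) : Prop :=
  ∀ p, N.pre p t → 0 < M p

/-- The marking obtained from `M` by firing the transition `t`. -/
noncomputable def fire (N : PetriNet P T A) (M : P → ℕ) (t : T) : P → ℕ :=
  fun p =>
    letI := Classical.propDecidable
    if N.pre p t ∧ ¬N.post t p then M p - 1
    else if ¬N.pre p t ∧ N.post t p then M p + 1
    else M p

/-- `Fires N M σ M'`: the firing sequence `σ` is enabled at `M` and leads to `M'`,
written `(N,M)[σ⟩(N,M')`. -/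
inductive Fires (N : PetriNet P T A) : (P → ℕ) → List T → (P → ℕ) → Prop
  | nil (M : P → ℕ) : Fires N M [] M
  | cons {M M' : P → ℕ} {t : T} {σ : List T} :
      N.Enabled M t → Fires N (N.fire M t) σ M' → Fires N M (t :: σ) M'

/-- The set of markings reachable from `M0`. -/
def reach (N : PetriNet P T A) (M0 : P → ℕ) : Set (P → ℕ) :=
  {M | ∃ σ : List T, Fires N M0 σ M}

/-- A system is `b`-bounded if every reachable marking has at most `b` tokens on each place. -/
def Bounded (N : PetriNet P T A) (M0 : P → ℕ) (b : ℕ) : Prop :=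
  ∀ M ∈ reach N M0, ∀ p, M p ≤ b

/-- A system is live if from every reachable marking every transition can be enabled again. -/
def Live (N : PetriNet P T A) (M0 : P → ℕ) : Prop :=
  ∀ M ∈ reach N M0, ∀ t : T, ∃ M' ∈ reach N M, N.Enabled M' t

/-- Free choice: any two transitions have equal or disjoint sets of input places. -/
def FreeChoice (N : PetriNet P T A) : Prop :=
  ∀ t t' : T, (∀ p, N.pre p t ↔ N.pre p t') ∨ ∀ p, ¬(N.pre p t ∧ N.pre p t')

/-- A firing sequence is biased if any two distinct transitions occurring in it
have disjoint sets of input places. -/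
def Biased (N : PetriNet P T A) (σ : List T) : Prop :=
  ∀ t ∈ σ, ∀ t' ∈ σ, t ≠ t' → ∀ p, ¬(N.pre p t ∧ N.pre p t')

/-- Undirected adjacency of the underlying bipartite graph. -/
def Adj (N : PetriNet P T A) : P ⊕ T → P ⊕ T → Prop
  | Sum.inl p, Sum.inr t => N.pre p t ∨ N.post t p
  | Sum.inr t, Sum.inl p => N.pre p t ∨ N.post t p
  | _, _ => False

/-- The underlying graph of the net is weakly connected. -/
def WeaklyConnected (N : PetriNet P T A) : Prop :=
  ∀ x y : P ⊕ T, Relation.ReflTransGen N.Adj x y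

end PetriNet

open PetriNet

/-- An accepting system: a Petri net with an initial and a final marking. -/
structure AcceptingSystem (P T A : Type) where
  net : PetriNet P T A
  init : P → ℕ
  final : P → ℕ

/-- A complete firing sequence leads from the initial to the final marking. -/
def CompleteFiring {P T A : Type} (S : AcceptingSystem P T A) (σ : List T) : Prop :=
  Fires S.net S.init σ S.final

/-- A move: `none` in a component stands for the no-move symbol `≫`. -/
abbrev Move (A T : Type) := Option A × Option T

/-- Legal moves: synchronous moves, log moves, and model moves. -/
def LegalMove {P T A : Type} (N : PetriNet P T A) : Move A T → Prop
  | (some a, some t) => N.label t = some a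
  | (some _, none) => True
  | (none, some _) => True
  | (none, none) => False

/-- `γ` is an alignment between the trace `σ` and the accepting system `S`. -/
def IsAlignment {P T A : Type} (S : AcceptingSystem P T A) (σ : List A)
    (γ : List (Move A T)) : Prop :=
  (∀ m ∈ γ, LegalMove S.net m) ∧
  γ.filterMap Prod.fst = σ ∧
  CompleteFiring S (γ.filterMap Prod.snd)

/-- The cost of an alignment with respect to a cost function. -/
def alignCost {A T : Type} (c : Move A T → NNReal) (γ : List (Move A T)) : NNReal :=
  (γ.map c).sum
/-- Transitions of the synchronous product: synchronous pairs `(t1,t2)` with equal labels,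
and the moves `(t1,≫)` and `(≫,t2)`, where `none` plays the role of `≫`. -/
def SyncTrans {P1 T1 P2 T2 A : Type} (N1 : PetriNet P1 T1 A) (N2 : PetriNet P2 T2 A) : Type :=
  {x : Option T1 × Option T2 //
    (∃ t1 t2, x = (some t1, some t2) ∧ N1.label t1 = N2.label t2) ∨
    (∃ t1, x = (some t1, none)) ∨ (∃ t2, x = (none, some t2))}

/-- The Petri net underlying the synchronous product of two nets. A product transition
inherits the arcs of its (non-`≫`) components. -/
def syncProdNet {P1 T1 P2 T2 A : Type} (N1 : PetriNet P1 T1 A) (N2 : PetriNet P2 T2 A) :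
    PetriNet (P1 ⊕ P2) (SyncTrans N1 N2) A where
  pre p t :=
    match p with
    | Sum.inl p1 => ∃ t1, t.val.1 = some t1 ∧ N1.pre p1 t1
    | Sum.inr p2 => ∃ t2, t.val.2 = some t2 ∧ N2.pre p2 t2
  post t p :=
    match p with
    | Sum.inl p1 => ∃ t1, t.val.1 = some t1 ∧ N1.post t1 p1
    | Sum.inr p2 => ∃ t2, t.val.2 = some t2 ∧ N2.post t2 p2
  label t := t.val.1.bind N1.label

/-- The synchronous product of two accepting systems: places are the disjoint union of the
places, the initial (final) marking is the sum of the initial (final) markings. -/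
def syncProd {P1 T1 P2 T2 A : Type}
    (S1 : AcceptingSystem P1 T1 A) (S2 : AcceptingSystem P2 T2 A) :
    AcceptingSystem (P1 ⊕ P2) (SyncTrans S1.net S2.net) A where
  net := syncProdNet S1.net S2.net
  init := Sum.elim S1.init S2.init
  final := Sum.elim S1.final S2.final
/-- The arcs of the reachability graph of a system: triples `(M,t,M')` with `M` reachable
and `(N,M)[t⟩(N,M')`. -/
def rgArcs {P T A : Type} (N : PetriNet P T A) (M0 : P → ℕ) :
    Set ((P → ℕ) × T × (P → ℕ)) :=
  {x | x.1 ∈ reach N M0 ∧ N.Enabled x.1 x.2.1 ∧ N.fire x.1 x.2.1 = x.2.2}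

/-- The arcs of the synchronous product of the reachability graphs of two systems:
either two arcs whose transitions carry equal labels are combined, or an arc of one graph is
combined with a stay-in-place `≫`-arc `(M,≫,M)` of the other graph. -/
def rgProdArcs {P1 T1 P2 T2 A : Type}
    (S1 : AcceptingSystem P1 T1 A) (S2 : AcceptingSystem P2 T2 A) :
    Set ((P1 ⊕ P2 → ℕ) × SyncTrans S1.net S2.net × (P1 ⊕ P2 → ℕ)) :=
  {x |
    (∃ t1 t2 M1 M1' M2 M2',
      x.2.1.val = (some t1, some t2) ∧ S1.net.label t1 = S2.net.label t2 ∧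
      (M1, t1, M1') ∈ rgArcs S1.net S1.init ∧ (M2, t2, M2') ∈ rgArcs S2.net S2.init ∧
      x.1 = Sum.elim M1 M2 ∧ x.2.2 = Sum.elim M1' M2') ∨
    (∃ t1 M1 M1' M2,
      x.2.1.val = (some t1, none) ∧
      (M1, t1, M1') ∈ rgArcs S1.net S1.init ∧ M2 ∈ reach S2.net S2.init ∧
      x.1 = Sum.elim M1 M2 ∧ x.2.2 = Sum.elim M1' M2) ∨
    (∃ t2 M2 M2' M1,
      x.2.1.val = (none, some t2) ∧
      (M2, t2, M2') ∈ rgArcs S2.net S2.init ∧ M1 ∈ reach S1.net S1.init ∧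
      x.1 = Sum.elim M1 M2 ∧ x.2.2 = Sum.elim M1 M2')}

section Aux

variable {P1 T1 P2 T2 A : Type} {N1 : PetriNet P1 T1 A} {N2 : PetriNet P2 T2 A}

lemma pre1_iff {t : SyncTrans N1 N2} {t1 : T1} (h : t.val.1 = some t1) (p1 : P1) :
    (syncProdNet N1 N2).pre (Sum.inl p1) t ↔ N1.pre p1 t1 := by
  constructor
  · rintro ⟨t1', h', hp⟩; rw [h] at h'; cases h'; exact hp
  · intro hp; exact ⟨t1, h, hp⟩

lemma post1_iff {t : SyncTrans N1 N2} {t1 : T1} (h : t.val.1 = some t1) (p1 : P1) :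
    (syncProdNet N1 N2).post t (Sum.inl p1) ↔ N1.post t1 p1 := by
  constructor
  · rintro ⟨t1', h', hp⟩; rw [h] at h'; cases h'; exact hp
  · intro hp; exact ⟨t1, h, hp⟩

lemma pre2_iff {t : SyncTrans N1 N2} {t2 : T2} (h : t.val.2 = some t2) (p2 : P2) :
    (syncProdNet N1 N2).pre (Sum.inr p2) t ↔ N2.pre p2 t2 := by
  constructor
  · rintro ⟨t2', h', hp⟩; rw [h] at h'; cases h'; exact hp
  · intro hp; exact ⟨t2, h, hp⟩

lemma post2_iff {t : SyncTrans N1 N2} {t2 : T2} (h : t.val.2 = some t2) (p2 : P2) :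
    (syncProdNet N1 N2).post t (Sum.inr p2) ↔ N2.post t2 p2 := by
  constructor
  · rintro ⟨t2', h', hp⟩; rw [h] at h'; cases h'; exact hp
  · intro hp; exact ⟨t2, h, hp⟩

lemma pre1_none {t : SyncTrans N1 N2} (h : t.val.1 = none) (p1 : P1) :
    ¬ (syncProdNet N1 N2).pre (Sum.inl p1) t := by
  rintro ⟨t1', h', _⟩; rw [h] at h'; cases h'

lemma post1_none {t : SyncTrans N1 N2} (h : t.val.1 = none) (p1 : P1) :
    ¬ (syncProdNet N1 N2).post t (Sum.inl p1) := by
  rintro ⟨t1', h', _⟩; rw [h] at h'; cases h'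

lemma pre2_none {t : SyncTrans N1 N2} (h : t.val.2 = none) (p2 : P2) :
    ¬ (syncProdNet N1 N2).pre (Sum.inr p2) t := by
  rintro ⟨t2', h', _⟩; rw [h] at h'; cases h'

lemma post2_none {t : SyncTrans N1 N2} (h : t.val.2 = none) (p2 : P2) :
    ¬ (syncProdNet N1 N2).post t (Sum.inr p2) := by
  rintro ⟨t2', h', _⟩; rw [h] at h'; cases h'

lemma fire_inl_some {t : SyncTrans N1 N2} {t1 : T1} (h : t.val.1 = some t1)
    (M1 : P1 → ℕ) (M2 : P2 → ℕ) (p1 : P1) :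
    (syncProdNet N1 N2).fire (Sum.elim M1 M2) t (Sum.inl p1) = N1.fire M1 t1 p1 := by
  have hA := propext (pre1_iff h p1)
  have hB := propext (post1_iff h p1)
  simp only [PetriNet.fire, Sum.elim_inl]
  rw [hA, hB]

lemma fire_inr_some {t : SyncTrans N1 N2} {t2 : T2} (h : t.val.2 = some t2)
    (M1 : P1 → ℕ) (M2 : P2 → ℕ) (p2 : P2) :
    (syncProdNet N1 N2).fire (Sum.elim M1 M2) t (Sum.inr p2) = N2.fire M2 t2 p2 := by
  have hA := propext (pre2_iff h p2)
  have hB := propext (post2_iff h p2)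
  simp only [PetriNet.fire, Sum.elim_inr]
  rw [hA, hB]

lemma fire_inl_none {t : SyncTrans N1 N2} (h : t.val.1 = none)
    (M1 : P1 → ℕ) (M2 : P2 → ℕ) (p1 : P1) :
    (syncProdNet N1 N2).fire (Sum.elim M1 M2) t (Sum.inl p1) = M1 p1 := by
  have hA : ¬ (syncProdNet N1 N2).pre (Sum.inl p1) t := pre1_none h p1
  have hB : ¬ (syncProdNet N1 N2).post t (Sum.inl p1) := post1_none h p1
  simp only [PetriNet.fire, Sum.elim_inl]
  rw [if_neg (fun hc => hA hc.1), if_neg (fun hc => hB hc.2)]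

lemma fire_inr_none {t : SyncTrans N1 N2} (h : t.val.2 = none)
    (M1 : P1 → ℕ) (M2 : P2 → ℕ) (p2 : P2) :
    (syncProdNet N1 N2).fire (Sum.elim M1 M2) t (Sum.inr p2) = M2 p2 := by
  have hA : ¬ (syncProdNet N1 N2).pre (Sum.inr p2) t := pre2_none h p2
  have hB : ¬ (syncProdNet N1 N2).post t (Sum.inr p2) := post2_none h p2
  simp only [PetriNet.fire, Sum.elim_inr]
  rw [if_neg (fun hc => hA hc.1), if_neg (fun hc => hB hc.2)]

lemma fire_both {t : SyncTrans N1 N2} {t1 : T1} {t2 : T2}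
    (h1 : t.val.1 = some t1) (h2 : t.val.2 = some t2) (M1 : P1 → ℕ) (M2 : P2 → ℕ) :
    (syncProdNet N1 N2).fire (Sum.elim M1 M2) t =
      Sum.elim (N1.fire M1 t1) (N2.fire M2 t2) := by
  funext p
  cases p with
  | inl p1 => exact fire_inl_some h1 M1 M2 p1
  | inr p2 => exact fire_inr_some h2 M1 M2 p2

lemma fire_left {t : SyncTrans N1 N2} {t1 : T1}
    (h1 : t.val.1 = some t1) (h2 : t.val.2 = none) (M1 : P1 → ℕ) (M2 : P2 → ℕ) :
    (syncProdNet N1 N2).fire (Sum.elim M1 M2) t = Sum.elim (N1.fire M1 t1) M2 := by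
  funext p
  cases p with
  | inl p1 => exact fire_inl_some h1 M1 M2 p1
  | inr p2 => exact fire_inr_none h2 M1 M2 p2

lemma fire_right {t : SyncTrans N1 N2} {t2 : T2}
    (h1 : t.val.1 = none) (h2 : t.val.2 = some t2) (M1 : P1 → ℕ) (M2 : P2 → ℕ) :
    (syncProdNet N1 N2).fire (Sum.elim M1 M2) t = Sum.elim M1 (N2.fire M2 t2) := by
  funext p
  cases p with
  | inl p1 => exact fire_inl_none h1 M1 M2 p1
  | inr p2 => exact fire_inr_some h2 M1 M2 p2

lemma enabled_both {t : SyncTrans N1 N2} {t1 : T1} {t2 : T2}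
    (h1 : t.val.1 = some t1) (h2 : t.val.2 = some t2) (M1 : P1 → ℕ) (M2 : P2 → ℕ) :
    (syncProdNet N1 N2).Enabled (Sum.elim M1 M2) t ↔
      N1.Enabled M1 t1 ∧ N2.Enabled M2 t2 := by
  constructor
  · intro h
    exact ⟨fun p1 hp => h (Sum.inl p1) ((pre1_iff h1 p1).mpr hp),
           fun p2 hp => h (Sum.inr p2) ((pre2_iff h2 p2).mpr hp)⟩
  · rintro ⟨e1, e2⟩ p hp
    cases p with
    | inl p1 => exact e1 p1 ((pre1_iff h1 p1).mp hp)
    | inr p2 => exact e2 p2 ((pre2_iff h2 p2).mp hp)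

lemma enabled_left {t : SyncTrans N1 N2} {t1 : T1}
    (h1 : t.val.1 = some t1) (h2 : t.val.2 = none) (M1 : P1 → ℕ) (M2 : P2 → ℕ) :
    (syncProdNet N1 N2).Enabled (Sum.elim M1 M2) t ↔ N1.Enabled M1 t1 := by
  constructor
  · intro h p1 hp; exact h (Sum.inl p1) ((pre1_iff h1 p1).mpr hp)
  · intro e1 p hp
    cases p with
    | inl p1 => exact e1 p1 ((pre1_iff h1 p1).mp hp)
    | inr p2 => exact absurd hp (pre2_none h2 p2)

lemma enabled_right {t : SyncTrans N1 N2} {t2 : T2}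
    (h1 : t.val.1 = none) (h2 : t.val.2 = some t2) (M1 : P1 → ℕ) (M2 : P2 → ℕ) :
    (syncProdNet N1 N2).Enabled (Sum.elim M1 M2) t ↔ N2.Enabled M2 t2 := by
  constructor
  · intro h p2 hp; exact h (Sum.inr p2) ((pre2_iff h2 p2).mpr hp)
  · intro e2 p hp
    cases p with
    | inl p1 => exact absurd hp (pre1_none h1 p1)
    | inr p2 => exact e2 p2 ((pre2_iff h2 p2).mp hp)

lemma Fires.append' {P T A : Type} {N : PetriNet P T A} {M M' M'' : P → ℕ}
    {σ σ' : List T} (h : Fires N M σ M') (h' : Fires N M' σ' M'') :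
    Fires N M (σ ++ σ') M'' := by
  induction h with
  | nil _ => exact h'
  | cons ht _ ih => exact Fires.cons ht (ih h')

lemma fires_left_lift {M1 M1' : P1 → ℕ} {σ1 : List T1}
    (h : Fires N1 M1 σ1 M1') (M2 : P2 → ℕ) :
    ∃ σ, Fires (syncProdNet N1 N2) (Sum.elim M1 M2) σ (Sum.elim M1' M2) := by
  induction h with
  | nil M => exact ⟨[], Fires.nil _⟩
  | @cons M M' t σ ht hf ih =>
    obtain ⟨σ', hσ'⟩ := ih
    refine ⟨(⟨(some t, none), Or.inr (Or.inl ⟨t, rfl⟩)⟩ : SyncTrans N1 N2) :: σ', ?_⟩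
    refine Fires.cons ((enabled_left rfl rfl M M2).mpr ht) ?_
    rwa [fire_left (t := ⟨(some t, none), Or.inr (Or.inl ⟨t, rfl⟩)⟩) rfl rfl M M2]

lemma fires_right_lift {M2 M2' : P2 → ℕ} {σ2 : List T2}
    (h : Fires N2 M2 σ2 M2') (M1 : P1 → ℕ) :
    ∃ σ, Fires (syncProdNet N1 N2) (Sum.elim M1 M2) σ (Sum.elim M1 M2') := by
  induction h with
  | nil M => exact ⟨[], Fires.nil _⟩
  | @cons M M' t σ ht hf ih =>
    obtain ⟨σ', hσ'⟩ := ih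
    refine ⟨(⟨(none, some t), Or.inr (Or.inr ⟨t, rfl⟩)⟩ : SyncTrans N1 N2) :: σ', ?_⟩
    refine Fires.cons ((enabled_right rfl rfl M1 M).mpr ht) ?_
    rwa [fire_right (t := ⟨(none, some t), Or.inr (Or.inr ⟨t, rfl⟩)⟩) rfl rfl M1 M]

lemma fires_decomp {M σ M'} (h : Fires (syncProdNet N1 N2) M σ M') :
    ∀ M1 M2, M = Sum.elim M1 M2 →
      ∃ M1' M2', (∃ σ1, Fires N1 M1 σ1 M1') ∧ (∃ σ2, Fires N2 M2 σ2 M2') ∧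
        M' = Sum.elim M1' M2' := by
  induction h with
  | nil M =>
    intro M1 M2 hM
    exact ⟨M1, M2, ⟨[], Fires.nil _⟩, ⟨[], Fires.nil _⟩, hM⟩
  | @cons M M' t σ ht hf ih =>
    intro M1 M2 hM
    subst hM
    rcases t.property with ⟨t1, t2, hval, _⟩ | ⟨t1, hval⟩ | ⟨t2, hval⟩
    · have h1 : t.val.1 = some t1 := by rw [hval]
      have h2 : t.val.2 = some t2 := by rw [hval]
      obtain ⟨e1, e2⟩ := (enabled_both h1 h2 M1 M2).mp ht
      obtain ⟨M1'', M2'', ⟨σ1, f1⟩, ⟨σ2, f2⟩, hM'⟩ :=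
        ih (N1.fire M1 t1) (N2.fire M2 t2) (fire_both h1 h2 M1 M2)
      exact ⟨M1'', M2'', ⟨t1 :: σ1, Fires.cons e1 f1⟩, ⟨t2 :: σ2, Fires.cons e2 f2⟩, hM'⟩
    · have h1 : t.val.1 = some t1 := by rw [hval]
      have h2 : t.val.2 = none := by rw [hval]
      have e1 := (enabled_left h1 h2 M1 M2).mp ht
      obtain ⟨M1'', M2'', ⟨σ1, f1⟩, hσ2, hM'⟩ :=
        ih (N1.fire M1 t1) M2 (fire_left h1 h2 M1 M2)
      exact ⟨M1'', M2'', ⟨t1 :: σ1, Fires.cons e1 f1⟩, hσ2, hM'⟩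
    · have h1 : t.val.1 = none := by rw [hval]
      have h2 : t.val.2 = some t2 := by rw [hval]
      have e2 := (enabled_right h1 h2 M1 M2).mp ht
      obtain ⟨M1'', M2'', hσ1, ⟨σ2, f2⟩, hM'⟩ :=
        ih M1 (N2.fire M2 t2) (fire_right h1 h2 M1 M2)
      exact ⟨M1'', M2'', hσ1, ⟨t2 :: σ2, Fires.cons e2 f2⟩, hM'⟩

end Aux

lemma reach_syncProd_eq {P1 T1 P2 T2 A : Type}
    (S1 : AcceptingSystem P1 T1 A) (S2 : AcceptingSystem P2 T2 A) :
    reach (syncProd S1 S2).net (syncProd S1 S2).init =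
      {M : P1 ⊕ P2 → ℕ | ∃ M1 ∈ reach S1.net S1.init, ∃ M2 ∈ reach S2.net S2.init,
        M = Sum.elim M1 M2} := by
  ext M
  constructor
  · rintro ⟨σ, hf⟩
    obtain ⟨M1, M2, ⟨σ1, f1⟩, ⟨σ2, f2⟩, hM⟩ := fires_decomp hf S1.init S2.init rfl
    exact ⟨M1, ⟨σ1, f1⟩, M2, ⟨σ2, f2⟩, hM⟩
  · rintro ⟨M1, ⟨σ1, f1⟩, M2, ⟨σ2, f2⟩, rfl⟩
    obtain ⟨σa, ha⟩ := fires_left_lift (N2 := S2.net) f1 S2.init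
    obtain ⟨σb, hb⟩ := fires_right_lift f2 M1
    exact ⟨σa ++ σb, Fires.append' ha hb⟩

/-- The synchronous product of the reachability graphs of two systems is identical to the
reachability graph of their synchronous product: same root, same vertices (a marking on
`P1 ∪ P2` is identified with `Sum.elim` of its restrictions), the same transitions by
construction, and the same labeled arcs. -/
theorem rg_syncProd_eq {P1 T1 P2 T2 A : Type}
    [Fintype P1] [Fintype T1] [Fintype P2] [Fintype T2]
    (S1 : AcceptingSystem P1 T1 A) (S2 : AcceptingSystem P2 T2 A)
    (hconn1 : S1.net.WeaklyConnected) (hconn2 : S2.net.WeaklyConnected) :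
    (syncProd S1 S2).init = Sum.elim S1.init S2.init ∧
    reach (syncProd S1 S2).net (syncProd S1 S2).init =
      {M : P1 ⊕ P2 → ℕ | ∃ M1 ∈ reach S1.net S1.init, ∃ M2 ∈ reach S2.net S2.init,
        M = Sum.elim M1 M2} ∧
    rgArcs (syncProd S1 S2).net (syncProd S1 S2).init = rgProdArcs S1 S2 := by
  refine ⟨rfl, reach_syncProd_eq S1 S2, ?_⟩
  ext ⟨M, t, M'⟩
  constructor
  · rintro ⟨hreach, hen, hfire⟩
    rw [reach_syncProd_eq S1 S2] at hreach
    obtain ⟨M1, hM1, M2, hM2, rfl⟩ := hreach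
    rcases t.property with ⟨t1, t2, hval, hlab⟩ | ⟨t1, hval⟩ | ⟨t2, hval⟩
    · have h1 : t.val.1 = some t1 := by rw [hval]
      have h2 : t.val.2 = some t2 := by rw [hval]
      obtain ⟨e1, e2⟩ := (enabled_both h1 h2 M1 M2).mp hen
      exact Or.inl ⟨t1, t2, M1, S1.net.fire M1 t1, M2, S2.net.fire M2 t2, hval, hlab,
        ⟨hM1, e1, rfl⟩, ⟨hM2, e2, rfl⟩, rfl, by rw [← hfire]; exact fire_both h1 h2 M1 M2⟩
    · have h1 : t.val.1 = some t1 := by rw [hval]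
      have h2 : t.val.2 = none := by rw [hval]
      have e1 := (enabled_left h1 h2 M1 M2).mp hen
      exact Or.inr (Or.inl ⟨t1, M1, S1.net.fire M1 t1, M2, hval,
        ⟨hM1, e1, rfl⟩, hM2, rfl, by rw [← hfire]; exact fire_left h1 h2 M1 M2⟩)
    · have h1 : t.val.1 = none := by rw [hval]
      have h2 : t.val.2 = some t2 := by rw [hval]
      have e2 := (enabled_right h1 h2 M1 M2).mp hen
      exact Or.inr (Or.inr ⟨t2, M2, S2.net.fire M2 t2, M1, hval,
        ⟨hM2, e2, rfl⟩, hM1, rfl, by rw [← hfire]; exact fire_right h1 h2 M1 M2⟩)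
  · rintro (⟨t1, t2, M1, M1', M2, M2', hval, _, ⟨hM1, e1, hf1⟩, ⟨hM2, e2, hf2⟩, hM, hM'⟩ |
      ⟨t1, M1, M1', M2, hval, ⟨hM1, e1, hf1⟩, hM2, hM, hM'⟩ |
      ⟨t2, M2, M2', M1, hval, ⟨hM2, e2, hf2⟩, hM1, hM, hM'⟩)
    · have h1 : t.val.1 = some t1 := by rw [hval]
      have h2 : t.val.2 = some t2 := by rw [hval]
      subst hM hM'
      dsimp only at hf1 hf2 hM1 hM2 e1 e2
      subst hf1 hf2
      refine ⟨?_, (enabled_both h1 h2 M1 M2).mpr ⟨e1, e2⟩, fire_both h1 h2 M1 M2⟩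
      rw [reach_syncProd_eq S1 S2]; exact ⟨M1, hM1, M2, hM2, rfl⟩
    · have h1 : t.val.1 = some t1 := by rw [hval]
      have h2 : t.val.2 = none := by rw [hval]
      subst hM hM'
      dsimp only at hf1 hM1 e1
      subst hf1
      refine ⟨?_, (enabled_left h1 h2 M1 M2).mpr e1, fire_left h1 h2 M1 M2⟩
      rw [reach_syncProd_eq S1 S2]; exact ⟨M1, hM1, M2, hM2, rfl⟩
    · have h1 : t.val.1 = none := by rw [hval]
      have h2 : t.val.2 = some t2 := by rw [hval]
      subst hM hM'
      dsimp only at hf2 hM2 e2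
      subst hf2
      refine ⟨?_, (enabled_right h1 h2 M1 M2).mpr e2, fire_right h1 h2 M1 M2⟩
      rw [reach_syncProd_eq S1 S2]; exact ⟨M1, hM1, M2, hM2, rfl⟩
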